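/- Let p ≥ 5 be prime and r with 0 < r < p such that 24r+1 is a quadratic nonresidue mod p. If f(q) is any formal power series over ℤ in the variable q^p (i.e., f(q) = g(q^p) for some power series g), then for all n ≥ 0 the coefficient of q^{pn+r} in (q;q)_∞ · f(q) vanishes modulo p... in fact vanishes identically over ℤ. -/

import Mathlib

/-- `(q^m; q^m)_∞ = ∏_{i ≥ 1} (1 - q^{m i})` as a formal power series over ℤ,
defined coefficientwise via the (stabilizing) partial products: for `m ≥ 1`,
the coefficient of `q^n` in `∏_{i=1}^{N} (1 - q^{m i})` is independent of `N`
once `N ≥ n`. -/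
noncomputable def pochSelf (m : ℕ) : PowerSeries ℤ :=
  PowerSeries.mk fun n => PowerSeries.coeff (R := ℤ) n
    (∏ i ∈ Finset.range (n + 1), (1 - (PowerSeries.X : PowerSeries ℤ) ^ (m * (i + 1))))

/-!
By Euler's pentagonal number theorem, `(q;q)_∞` is supported on the generalized pentagonal
numbers `k(3k-1)/2`, and `24 · k(3k-1)/2 + 1 = (6k-1)²`. Hence when `24r+1` is not a square
mod `p`, no exponent `≡ r (mod p)` occurs in `(q;q)_∞`; since `f` only has exponents divisible
by `p`, every term contributing to the coefficient of `q^{pn+r}` in the product vanishes.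
-/

open PowerSeries Finset

theorem coeff_prod_one_sub_X_pow_of_range_subset {R : Type*} [CommRing R] {n : ℕ}
    {s : Finset ℕ} (hs : range (n + 1) ⊆ s) :
    coeff n (∏ i ∈ s, (1 - X ^ (i + 1) : R⟦X⟧)) =
      coeff n (∏ i ∈ range (n + 1), (1 - X ^ (i + 1) : R⟦X⟧)) := by
  nontriviality R
  rw [← prod_sdiff hs, mul_comm]
  refine coeff_mul_prod_one_sub_of_lt_order _ _ _ _ fun i hi => ?_
  have : n < i + 1 := by grind
  rw [order_X_pow]
  exact_mod_cast this

theorem coeff_prod_range_one_sub_X_pow (R : Type*) [CommRing R] (n : ℕ) :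
    coeff n (∏ i ∈ range (n + 1), (1 - X ^ (i + 1) : R⟦X⟧)) =
      coeff n (pentagonalSeries R) := by
  obtain ⟨s, hs⟩ := Filter.eventually_atTop.1 (coeff_prod_one_sub_X_pow_eventually_eq R n)
  rw [← coeff_prod_one_sub_X_pow_of_range_subset (s := s ∪ range (n + 1)) subset_union_right]
  exact hs _ subset_union_left

theorem pochSelf_one : pochSelf 1 = pentagonalSeries ℤ := by
  ext n
  simpa [pochSelf] using coeff_prod_range_one_sub_X_pow ℤ n

theorem isSquare_twentyFour_mul_pentagonal_add_one (k : ℤ) :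
    IsSquare (24 * (pentagonal k : ℤ) + 1) :=
  ⟨6 * k - 1, by linear_combination 12 * two_mul_natCast_pentagonal k⟩

theorem coeff_pentagonalSeries_eq_zero_of_not_isSquare {R S : Type*} [CommRing R] [CommRing S]
    {n : ℕ} (h : ¬ IsSquare (24 * (n : S) + 1)) : coeff n (pentagonalSeries R) = 0 := by
  refine coeff_pentagonalSeries_eq_zero R fun ⟨k, hk⟩ => h ?_
  have := (isSquare_twentyFour_mul_pentagonal_add_one k).map (Int.castRingHom S)
  simpa [hk] using this

theorem coeff_mul_eq_zero_of_modEq {R : Type*} [Semiring R] {p k : ℕ} {φ ψ : R⟦X⟧}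
    (hφ : ∀ m, m ≡ k [MOD p] → coeff m φ = 0) (hψ : ∀ m, ¬ p ∣ m → coeff m ψ = 0) :
    coeff k (φ * ψ) = 0 := by
  rw [coeff_mul]
  refine sum_eq_zero fun ⟨a, b⟩ hab => ?_
  rw [HasAntidiagonal.mem_antidiagonal] at hab
  by_cases hb : p ∣ b
  · have : a ≡ k [MOD p] := by
      simpa [← hab] using (Nat.modEq_zero_iff_dvd.2 hb).symm.add_left a
    rw [hφ a this, zero_mul]
  · rw [hψ b hb, mul_zero]

theorem coeff_eta_mul_series_in_qp_general (p : ℕ)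
    (r : ℕ)
    (hqnr : ¬ IsSquare ((24 * r + 1 : ℕ) : ZMod p))
    (f : PowerSeries ℤ) (hf : ∀ m : ℕ, ¬ p ∣ m → PowerSeries.coeff (R := ℤ) m f = 0)
    (n : ℕ) :
    PowerSeries.coeff (R := ℤ) (p * n + r) (pochSelf 1 * f) = 0 := by
  rw [pochSelf_one]
  refine coeff_mul_eq_zero_of_modEq (fun m hm => ?_) hf
  refine coeff_pentagonalSeries_eq_zero_of_not_isSquare (S := ZMod p) ?_
  have hmr : (m : ZMod p) = r := by
    simpa using (ZMod.natCast_eq_natCast_iff _ _ _).2 hm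
  simpa [hmr] using hqnr

/-- If `f` is a power series in `q^p` (i.e. all coefficients at exponents not
divisible by `p` vanish), and `24r+1` is a quadratic nonresidue mod the prime
`p ≥ 5` with `0 < r < p`, then the coefficient of `q^{pn+r}` in
`(q;q)_∞ · f` vanishes identically over ℤ. -/
theorem coeff_eta_mul_series_in_qp (p : ℕ) (hp : p.Prime) (hp5 : 5 ≤ p)
    (r : ℕ) (hr0 : 0 < r) (hrp : r < p)
    (hqnr : ¬ IsSquare ((24 * r + 1 : ℕ) : ZMod p))
    (f : PowerSeries ℤ) (hf : ∀ m : ℕ, ¬ p ∣ m → PowerSeries.coeff (R := ℤ) m f = 0)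
    (n : ℕ) :
    PowerSeries.coeff (R := ℤ) (p * n + r) (pochSelf 1 * f) = 0 :=
  coeff_eta_mul_series_in_qp_general p r hqnr f hf n
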